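/- arXiv:2601.06736 — 3 statements merged into one kernel-verified Lean document; each statement's English description precedes it below -/
import Mathlib

section
/- In the three-colour twisted code: every dressed Gauss operator is an involution, and the group commutators of dressed Gauss operators of distinct colours are the diagonal flux-type operators; explicitly, for all σ ∈ Σ_{p−1}, ξ ∈ Σ_{q−1}, ζ ∈ Σ_{s−1}: Ã^r_σ ∘ Ã^b_ξ ∘ Ã^r_σ ∘ Ã^b_ξ multiplies ψ(a,b,c) by (−1)^{∫ (σ̃ ∪ ξ̃) ∪ dc}; Ã^r_σ ∘ Ã^g_ζ ∘ Ã^r_σ ∘ Ã^g_ζ multiplies ψ(a,b,c) by (−1)^{∫ σ̃ ∪ db ∪ ζ̃}; and Ã^b_ξ ∘ Ã^g_ζ ∘ Ã^b_ξ ∘ Ã^g_ζ multiplies ψ(a,b,c) by (−1)^{∫ da ∪ ξ̃ ∪ ζ̃}. That is, the commutators of the dressed Gauss (Ã) stabilizers are products of flux (B) stabilizers (Lemma 3, commutator formulas). -/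
noncomputable section

open scoped BigOperators

/-- Transport a cochain along an equality of degrees. -/
def cellCast {cells : ℕ → Type} {i j : ℕ} (h : i = j) (x : cells i → ZMod 2) :
    cells j → ZMod 2 :=
  fun σ => x (cast (congrArg cells h.symm) σ)

/-- A *cochain system* of dimension `N` over `𝔽₂ = ZMod 2`: finite sets of cells in
each degree, `𝔽₂`-linear coboundary maps `d` with `d ∘ d = 0`, `𝔽₂`-bilinear associative
cup products satisfying the Leibniz rule, and an `𝔽₂`-linear integral on top-degree
cochains satisfying the Stokes identity.  (These are the structures carried by the `𝔽₂`
cellular cochains of a closed Poincaré CW complex.) -/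
structure CochainSystem (N : ℕ) where
  cells : ℕ → Type
  fintypeCells : ∀ i, Fintype (cells i)
  decEqCells : ∀ i, DecidableEq (cells i)
  d : ∀ i, (cells i → ZMod 2) →ₗ[ZMod 2] (cells (i + 1) → ZMod 2)
  cup : ∀ i j, (cells i → ZMod 2) →ₗ[ZMod 2]
    ((cells j → ZMod 2) →ₗ[ZMod 2] (cells (i + j) → ZMod 2))
  integ : (cells N → ZMod 2) →ₗ[ZMod 2] ZMod 2
  d_comp_d : ∀ (i : ℕ) (x : cells i → ZMod 2), d (i + 1) (d i x) = 0
  cup_assoc : ∀ {i j k : ℕ} (u : cells i → ZMod 2) (v : cells j → ZMod 2)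
    (w : cells k → ZMod 2),
    cup (i + j) k (cup i j u v) w
      = cellCast (Nat.add_assoc i j k).symm (cup i (j + k) u (cup j k v w))
  leibniz : ∀ {i j : ℕ} (u : cells i → ZMod 2) (v : cells j → ZMod 2),
    d (i + j) (cup i j u v)
      = cellCast (by omega : i + 1 + j = i + j + 1) (cup (i + 1) j (d i u) v)
        + cellCast (by omega : i + (j + 1) = i + j + 1) (cup i (j + 1) u (d j v))
  stokes : ∀ (k : ℕ) (hk : k + 1 = N) (w : cells k → ZMod 2),
    integ (cellCast hk (d k w)) = 0

attribute [instance] CochainSystem.fintypeCells CochainSystem.decEqCells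

namespace CochainSystem

variable {N : ℕ}

/-- The degree-`i` cochain space `Cⁱ`. -/
abbrev C (S : CochainSystem N) (i : ℕ) : Type := S.cells i → ZMod 2

/-- The indicator cochain `σ̃` of a cell `σ`. -/
def indicator (S : CochainSystem N) {i : ℕ} (σ : S.cells i) : S.C i :=
  fun τ => if τ = σ then 1 else 0

/-- `∫ (u ∪ v) ∪ w` when the degrees add up to `N`. -/
def integ3 (S : CochainSystem N) {i j k : ℕ} (h : i + j + k = N)
    (u : S.C i) (v : S.C j) (w : S.C k) : ZMod 2 :=
  S.integ (cellCast h (S.cup (i + j) k (S.cup i j u v) w))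

end CochainSystem

/-- The sign `(-1)ᵗ ∈ ℂ` of `t ∈ 𝔽₂`. -/
def sgn (t : ZMod 2) : ℂ := (-1 : ℂ) ^ t.val

open CochainSystem

section Twisted

variable {N p q s : ℕ}

/-- A configuration of `ℤ₂`-gauge fields for the three colours `r`, `b`, `g`. -/
abbrev Config (S : CochainSystem N) (p q s : ℕ) : Type :=
  S.C (p + 1) × S.C (q + 1) × S.C (s + 1)

/-- The three-colour qubit space `V = ((Cᵖ × C^q × C^s) → ℂ)` of the twisted code. -/
abbrev QSpace (S : CochainSystem N) (p q s : ℕ) : Type := Config S p q s → ℂ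

/-- The dressed Gauss operator `Ã^r_σ` of the twisted code:
`(Ã^r_σ ψ)(a,b,c) = (−1)^{∫ σ̃ ∪ b ∪ c} ψ(a + dσ̃, b, c)`. -/
def gaussR (S : CochainSystem N) (h : p + 1 + (q + 1) + (s + 1) = N + 1)
    (σ : S.cells p) : QSpace S p q s → QSpace S p q s :=
  fun ψ x =>
    sgn (S.integ3 (show p + (q + 1) + (s + 1) = N by omega) (S.indicator σ) x.2.1 x.2.2)
      * ψ (x.1 + S.d p (S.indicator σ), x.2.1, x.2.2)

/-- The dressed Gauss operator `Ã^b_ξ`: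
`(Ã^b_ξ ψ)(a,b,c) = (−1)^{∫ a ∪ ξ̃ ∪ c} ψ(a, b + dξ̃, c)`. -/
def gaussB (S : CochainSystem N) (h : p + 1 + (q + 1) + (s + 1) = N + 1)
    (ξ : S.cells q) : QSpace S p q s → QSpace S p q s :=
  fun ψ x =>
    sgn (S.integ3 (show p + 1 + q + (s + 1) = N by omega) x.1 (S.indicator ξ) x.2.2)
      * ψ (x.1, x.2.1 + S.d q (S.indicator ξ), x.2.2)

/-- The dressed Gauss operator `Ã^g_ζ`:
`(Ã^g_ζ ψ)(a,b,c) = (−1)^{∫ a ∪ b ∪ ζ̃} ψ(a, b, c + dζ̃)`. -/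
def gaussG (S : CochainSystem N) (h : p + 1 + (q + 1) + (s + 1) = N + 1)
    (ζ : S.cells s) : QSpace S p q s → QSpace S p q s :=
  fun ψ x =>
    sgn (S.integ3 (show p + 1 + (q + 1) + s = N by omega) x.1 x.2.1 (S.indicator ζ))
      * ψ (x.1, x.2.1, x.2.2 + S.d s (S.indicator ζ))

/-- The diagonal flux operator `B^r_τ`, multiplying `ψ(a,b,c)` by `(−1)^{(da)(τ)}`. -/
def fluxR (S : CochainSystem N) (p q s : ℕ) (τ : S.cells (p + 2)) :
    QSpace S p q s → QSpace S p q s :=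
  fun ψ x => sgn (S.d (p + 1) x.1 τ) * ψ x

/-- The diagonal flux operator `B^b_τ′`, multiplying `ψ(a,b,c)` by `(−1)^{(db)(τ′)}`. -/
def fluxB (S : CochainSystem N) (p q s : ℕ) (τ' : S.cells (q + 2)) :
    QSpace S p q s → QSpace S p q s :=
  fun ψ x => sgn (S.d (q + 1) x.2.1 τ') * ψ x

/-- The diagonal flux operator `B^g_τ″`, multiplying `ψ(a,b,c)` by `(−1)^{(dc)(τ″)}`. -/
def fluxG (S : CochainSystem N) (p q s : ℕ) (τ'' : S.cells (s + 2)) :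
    QSpace S p q s → QSpace S p q s :=
  fun ψ x => sgn (S.d (s + 1) x.2.2 τ'') * ψ x

/-- The zero-flux subspace: vectors supported on flat (cocycle) configurations. -/
def ZeroFlux (S : CochainSystem N) (p q s : ℕ) : Set (QSpace S p q s) :=
  {ψ | ∀ x : Config S p q s, ψ x ≠ 0 →
    S.d (p + 1) x.1 = 0 ∧ S.d (q + 1) x.2.1 = 0 ∧ S.d (s + 1) x.2.2 = 0}

/-- The code space of the twisted code: vectors fixed by every dressed Gauss operator
and every flux operator. -/
def CodeSpace (S : CochainSystem N) (h : p + 1 + (q + 1) + (s + 1) = N + 1) :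
    Set (QSpace S p q s) :=
  {ψ | (∀ σ : S.cells p, gaussR S h σ ψ = ψ)
    ∧ (∀ ξ : S.cells q, gaussB S h ξ ψ = ψ)
    ∧ (∀ ζ : S.cells s, gaussG S h ζ ψ = ψ)
    ∧ (∀ τ : S.cells (p + 2), fluxR S p q s τ ψ = ψ)
    ∧ (∀ τ' : S.cells (q + 2), fluxB S p q s τ' ψ = ψ)
    ∧ (∀ τ'' : S.cells (s + 2), fluxG S p q s τ'' ψ = ψ)}

/-- The set of stabilizer generators of the twisted code. -/
def Stabilizer (S : CochainSystem N) (h : p + 1 + (q + 1) + (s + 1) = N + 1) :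
    Set (QSpace S p q s → QSpace S p q s) :=
  {O | (∃ σ, O = gaussR S h σ) ∨ (∃ ξ, O = gaussB S h ξ) ∨ (∃ ζ, O = gaussG S h ζ)
    ∨ (∃ τ, O = fluxR S p q s τ) ∨ (∃ τ', O = fluxB S p q s τ')
    ∨ (∃ τ'', O = fluxG S p q s τ'')}

end Twisted


/-! ### Auxiliary lemmas -/

lemma zmod2_cases (t : ZMod 2) : t = 0 ∨ t = 1 := by revert t; decide

lemma sgn_add (t u : ZMod 2) : sgn (t + u) = sgn t * sgn u := by
  have v1 : (1 : ZMod 2).val = 1 := rfl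
  have h11 : (1 + 1 : ZMod 2) = 0 := by decide
  rcases zmod2_cases t with rfl | rfl <;> rcases zmod2_cases u with rfl | rfl <;>
    simp [sgn, v1, h11]

namespace CochainSystem

variable {N : ℕ} (S : CochainSystem N)

lemma C_add_self {i : ℕ} (x : S.C i) : x + x = 0 := by
  funext σ
  have : ∀ t : ZMod 2, t + t = 0 := by decide
  exact this _

lemma C_add_add_self {i : ℕ} (x y : S.C i) : x + y + y = x := by
  rw [add_assoc, S.C_add_self, add_zero]

lemma cellCast_trans {cells : ℕ → Type} {i j k : ℕ} (h1 : i = j) (h2 : j = k)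
    (x : cells i → ZMod 2) :
    cellCast (cells := cells) h2 (cellCast h1 x) = cellCast (h1.trans h2) x := by
  subst h1; subst h2; rfl

lemma cellCast_add {cells : ℕ → Type} {i j : ℕ} (h : i = j)
    (x y : cells i → ZMod 2) :
    cellCast (cells := cells) h (x + y) = cellCast h x + cellCast h y := rfl

lemma cup_cast_left {i i' j : ℕ} (h : i = i') (x : S.C i) (y : S.C j) :
    S.cup i' j (cellCast (cells := S.cells) h x) y
      = cellCast (by rw [h]) (S.cup i j x y) := by
  subst h; rfl

lemma integ3_add_left {i j k : ℕ} (h : i + j + k = N)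
    (u u' : S.C i) (v : S.C j) (w : S.C k) :
    S.integ3 h (u + u') v w = S.integ3 h u v w + S.integ3 h u' v w := by
  simp [integ3, map_add, LinearMap.add_apply, cellCast_add]

lemma integ3_add_mid {i j k : ℕ} (h : i + j + k = N)
    (u : S.C i) (v v' : S.C j) (w : S.C k) :
    S.integ3 h u (v + v') w = S.integ3 h u v w + S.integ3 h u v' w := by
  simp [integ3, map_add, LinearMap.add_apply, cellCast_add]

/-- `∫ du ∪ v ∪ w + ∫ u ∪ dv ∪ w + ∫ u ∪ v ∪ dw = 0`: Stokes + Leibniz. -/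
lemma stokes3 {i j k : ℕ} (h1 : i + 1 + j + k = N) (h2 : i + (j + 1) + k = N)
    (h3 : i + j + (k + 1) = N) (u : S.C i) (v : S.C j) (w : S.C k) :
    S.integ3 h1 (S.d i u) v w + S.integ3 h2 u (S.d j v) w
      + S.integ3 h3 u v (S.d k w) = 0 := by
  have hN : i + j + k + 1 = N := by omega
  have hs := S.stokes (i + j + k) hN (S.cup (i + j) k (S.cup i j u v) w)
  rw [S.leibniz (S.cup i j u v) w, S.leibniz u v] at hs
  simp only [map_add, LinearMap.add_apply, cellCast_add, S.cup_cast_left,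
    cellCast_trans] at hs
  simp only [integ3]
  linear_combination hs

end CochainSystem


lemma sgn_sq (t : ZMod 2) : sgn t * sgn t = 1 := by
  have v1 : (1 : ZMod 2).val = 1 := rfl
  rcases zmod2_cases t with rfl | rfl <;> simp [sgn, v1]

lemma sgn4 (t1 t2 t3 t4 u : ZMod 2) (hT : t1 + t2 + t3 + t4 = u) (z : ℂ) :
    sgn t1 * (sgn t2 * (sgn t3 * (sgn t4 * z))) = sgn u * z := by
  subst hT; rw [sgn_add, sgn_add, sgn_add]; ring

lemma zmod2_helperRB : ∀ a b x y t : ZMod 2,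
    x + y + t = 0 → a + (b + x) + (a + y) + b = t := by decide

lemma zmod2_helperRG : ∀ a b x t y : ZMod 2,
    x + t + y = 0 → a + (b + x) + (a + y) + b = t := by decide

lemma zmod2_helperBG : ∀ a b x y t : ZMod 2,
    t + x + y = 0 → a + (b + x) + (a + y) + b = t := by decide

lemma CochainSystem.integ3_add_right {N : ℕ} (S : CochainSystem N) {i j k : ℕ}
    (h : i + j + k = N) (u : S.C i) (v : S.C j) (w w' : S.C k) :
    S.integ3 h u v (w + w') = S.integ3 h u v w + S.integ3 h u v w' := by
  simp [CochainSystem.integ3, map_add, LinearMap.add_apply,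
    CochainSystem.cellCast_add]

/-- **Lemma 3 (commutator formulas).** Every dressed Gauss operator of the three-colour
twisted code is an involution, and the group commutators of dressed Gauss operators of
distinct colours are the diagonal flux-type operators:
`Ã^r_σ ∘ Ã^b_ξ ∘ Ã^r_σ ∘ Ã^b_ξ` multiplies `ψ(a,b,c)` by `(−1)^{∫ (σ̃ ∪ ξ̃) ∪ dc}`,
`Ã^r_σ ∘ Ã^g_ζ ∘ Ã^r_σ ∘ Ã^g_ζ` multiplies by `(−1)^{∫ σ̃ ∪ db ∪ ζ̃}`, and
`Ã^b_ξ ∘ Ã^g_ζ ∘ Ã^b_ξ ∘ Ã^g_ζ` multiplies by `(−1)^{∫ da ∪ ξ̃ ∪ ζ̃}`. -/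
theorem twisted_gauss_commutators
    {N p q s : ℕ} (S : CochainSystem N) (h : p + 1 + (q + 1) + (s + 1) = N + 1) :
    (∀ σ : S.cells p, gaussR S h σ ∘ gaussR S h σ = id) ∧
    (∀ ξ : S.cells q, gaussB S h ξ ∘ gaussB S h ξ = id) ∧
    (∀ ζ : S.cells s, gaussG S h ζ ∘ gaussG S h ζ = id) ∧
    (∀ (σ : S.cells p) (ξ : S.cells q) (ψ : QSpace S p q s) (x : Config S p q s),
      (gaussR S h σ ∘ gaussB S h ξ ∘ gaussR S h σ ∘ gaussB S h ξ) ψ x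
        = sgn (S.integ3 (show p + q + (s + 1 + 1) = N by omega)
            (S.indicator σ) (S.indicator ξ) (S.d (s + 1) x.2.2)) * ψ x) ∧
    (∀ (σ : S.cells p) (ζ : S.cells s) (ψ : QSpace S p q s) (x : Config S p q s),
      (gaussR S h σ ∘ gaussG S h ζ ∘ gaussR S h σ ∘ gaussG S h ζ) ψ x
        = sgn (S.integ3 (show p + (q + 1 + 1) + s = N by omega)
            (S.indicator σ) (S.d (q + 1) x.2.1) (S.indicator ζ)) * ψ x) ∧
    (∀ (ξ : S.cells q) (ζ : S.cells s) (ψ : QSpace S p q s) (x : Config S p q s),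
      (gaussB S h ξ ∘ gaussG S h ζ ∘ gaussB S h ξ ∘ gaussG S h ζ) ψ x
        = sgn (S.integ3 (show p + 1 + 1 + q + s = N by omega)
            (S.d (p + 1) x.1) (S.indicator ξ) (S.indicator ζ)) * ψ x) := by
  refine ⟨?_, ?_, ?_, ?_, ?_, ?_⟩
  · intro σ; funext ψ x; obtain ⟨a, b, c⟩ := x
    simp only [Function.comp_apply, gaussR, id_eq]
    rw [S.C_add_add_self, ← mul_assoc, sgn_sq, one_mul]
  · intro ξ; funext ψ x; obtain ⟨a, b, c⟩ := x
    simp only [Function.comp_apply, gaussB, id_eq]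
    rw [S.C_add_add_self, ← mul_assoc, sgn_sq, one_mul]
  · intro ζ; funext ψ x; obtain ⟨a, b, c⟩ := x
    simp only [Function.comp_apply, gaussG, id_eq]
    rw [S.C_add_add_self, ← mul_assoc, sgn_sq, one_mul]
  · intro σ ξ ψ x; obtain ⟨a, b, c⟩ := x
    simp only [Function.comp_apply, gaussR, gaussB]
    simp only [S.C_add_add_self]
    refine sgn4 _ _ _ _ _ ?_ _
    rw [S.integ3_add_left, S.integ3_add_mid]
    exact zmod2_helperRB _ _ _ _ _
      (S.stokes3 (by omega) (by omega) (by omega)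
        (S.indicator σ) (S.indicator ξ) c)
  · intro σ ζ ψ x; obtain ⟨a, b, c⟩ := x
    simp only [Function.comp_apply, gaussR, gaussG]
    simp only [S.C_add_add_self]
    refine sgn4 _ _ _ _ _ ?_ _
    rw [S.integ3_add_left, S.integ3_add_right]
    exact zmod2_helperRG _ _ _ _ _
      (S.stokes3 (by omega) (by omega) (by omega)
        (S.indicator σ) b (S.indicator ζ))
  · intro ξ ζ ψ x; obtain ⟨a, b, c⟩ := x
    simp only [Function.comp_apply, gaussB, gaussG]
    simp only [S.C_add_add_self]
    refine sgn4 _ _ _ _ _ ?_ _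
    rw [S.integ3_add_mid, S.integ3_add_right]
    exact zmod2_helperBG _ _ _ _ _
      (S.stokes3 (by omega) (by omega) (by omega)
        a (S.indicator ξ) (S.indicator ζ))
end
end

section
/- For all H₁ and H₂: D₁ ∘ D₂ = 0, and the homology dimensions of the product complex are given by the Künneth formula: dim(ker D₂) = (n₁ − r₁)(n₂ − r₂); dim(ker D₁ / range D₂) = (n₁ − r₁)(m₂ − r₂) + (m₁ − r₁)(n₂ − r₂); and dim(Matrix (Fin m₁) (Fin m₂) 𝔽₂ / range D₁) = (m₁ − r₁)(m₂ − r₂). In particular the middle formula is the number of logical qubits of the 2D hypergraph-product code, so hypergraph products of classical codes of linear dimension have constant encoding rate (the dimension count via the Künneth formula underlying Lemmas 5, 6 and 12). -/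
noncomputable section

open Matrix

/-- `𝔽₂`. -/
abbrev F2 : Type := ZMod 2

/-- The second differential of the hypergraph-product complex:
`D₂(X) = (H₁ * X, X * H₂ᵀ)`. -/
def D2 {m₁ n₁ m₂ n₂ : ℕ} (H₁ : Matrix (Fin m₁) (Fin n₁) F2)
    (H₂ : Matrix (Fin m₂) (Fin n₂) F2) :
    Matrix (Fin n₁) (Fin n₂) F2 →ₗ[F2]
      Matrix (Fin m₁) (Fin n₂) F2 × Matrix (Fin n₁) (Fin m₂) F2 where
  toFun X := (H₁ * X, X * H₂ᵀ)
  map_add' X Y := by simp [Matrix.mul_add, Matrix.add_mul, Prod.ext_iff]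
  map_smul' r X := by simp [Matrix.mul_smul, Matrix.smul_mul, Prod.ext_iff]

/-- The first differential of the hypergraph-product complex:
`D₁(U, W) = U * H₂ᵀ + H₁ * W`. -/
def D1 {m₁ n₁ m₂ n₂ : ℕ} (H₁ : Matrix (Fin m₁) (Fin n₁) F2)
    (H₂ : Matrix (Fin m₂) (Fin n₂) F2) :
    Matrix (Fin m₁) (Fin n₂) F2 × Matrix (Fin n₁) (Fin m₂) F2 →ₗ[F2]
      Matrix (Fin m₁) (Fin m₂) F2 where
  toFun P := P.1 * H₂ᵀ + H₁ * P.2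
  map_add' P Q := by
    simp only [Prod.fst_add, Prod.snd_add, Matrix.add_mul, Matrix.mul_add]
    abel
  map_smul' r P := by
    simp [Matrix.smul_mul, Matrix.mul_smul, smul_add]

/-!
Over a field every matrix is equivalent to the partial identity of its rank:
`H = P * stdRank m n (rank H) * Q` with `P`, `Q` invertible. Multiplying by these invertible
matrices on both sides is an isomorphism from the product complex of `(H₁, H₂)` to that of the
two partial identities, so it suffices to compute there. For partial identities, `ker D₂` and a
complement of `range D₁` are the coordinate subspaces supported on the corner `r₁ ≤ i, r₂ ≤ j`,
of dimensions `(n₁ - r₁)(n₂ - r₂)` and `(m₁ - r₁)(m₂ - r₂)`. The middle homology then follows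
from rank-nullity: its dimension is `dim C₁ - rank D₂ - rank D₁`.
-/

open Module LinearMap Finset Matrix

section Transfer

variable {K U V U' V' : Type*} [Ring K] [AddCommGroup U] [Module K U] [AddCommGroup V]
  [Module K V] [AddCommGroup U'] [Module K U'] [AddCommGroup V'] [Module K V']
  {f : U →ₗ[K] V} {f' : U' →ₗ[K] V'}

theorem LinearMap.finrank_ker_eq_of_comp_eq (e : U ≃ₗ[K] U') (e' : V ≃ₗ[K] V')
    (h : e'.toLinearMap ∘ₗ f = f' ∘ₗ e.toLinearMap) :
    finrank K (ker f) = finrank K (ker f') := by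
  have : ker f = (ker f').comap e.toLinearMap := by
    rw [← LinearEquiv.ker_comp e' f, h, ker_comp]
  rw [this, Submodule.comap_equiv_eq_map_symm, LinearEquiv.finrank_map_eq]

theorem LinearMap.finrank_range_eq_of_comp_eq (e : U ≃ₗ[K] U') (e' : V ≃ₗ[K] V')
    (h : e'.toLinearMap ∘ₗ f = f' ∘ₗ e.toLinearMap) :
    finrank K (range f) = finrank K (range f') := by
  have : range f' = (range f).map e'.toLinearMap := by
    rw [← range_comp, h, range_comp_of_range_eq_top _ e.range]
  rw [this, LinearEquiv.finrank_map_eq]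

end Transfer

theorem LinearMap.finrank_homology_add_finrank_range_add_finrank_range {K U V W : Type*}
    [DivisionRing K] [AddCommGroup U] [Module K U] [AddCommGroup V] [Module K V]
    [FiniteDimensional K V] [AddCommGroup W] [Module K W] {f : U →ₗ[K] V} {g : V →ₗ[K] W}
    (hgf : g ∘ₗ f = 0) :
    finrank K (ker g ⧸ (range f).comap (ker g).subtype) + finrank K (range f)
      + finrank K (range g) = finrank K V := by
  have hle : range f ≤ ker g := range_le_ker_iff.mpr hgf
  rw [← (Submodule.comapSubtypeEquivOfLe hle).finrank_eq,
    Submodule.finrank_quotient_add_finrank, add_comm, g.finrank_range_add_finrank_ker]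

namespace Matrix

section StdRank

variable {R : Type*} [CommSemiring R]

def stdRank (m n r : ℕ) : Matrix (Fin m) (Fin n) R :=
  of fun i j => if (i : ℕ) = j ∧ (j : ℕ) < r then 1 else 0

theorem stdRank_transpose (m n r : ℕ) : (stdRank m n r : Matrix _ _ R)ᵀ = stdRank n m r := by
  ext i j
  simp only [stdRank, transpose_apply, of_apply]
  grind

theorem stdRank_mul_apply {m n r : ℕ} (hr : r ≤ n) {ι : Type*} (X : Matrix (Fin n) ι R)
    (i : Fin m) (j : ι) :
    ((stdRank m n r : Matrix (Fin m) (Fin n) R) * X) i j =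
      if h : (i : ℕ) < r then X ⟨i, h.trans_le hr⟩ j else 0 := by
  split_ifs with h
  · rw [mul_apply, Finset.sum_eq_single ⟨i, h.trans_le hr⟩]
    · simp [stdRank, h]
    · intro k _ hk
      simp only [stdRank, of_apply]
      rw [if_neg (by rintro ⟨hik, -⟩; exact hk (Fin.ext hik.symm)), zero_mul]
    · simp
  · rw [mul_apply]
    refine Finset.sum_eq_zero fun k _ => ?_
    simp only [stdRank, of_apply]
    rw [if_neg (by omega), zero_mul]

theorem mul_stdRank_apply {m n r : ℕ} (hr : r ≤ m) {ι : Type*} [Fintype ι]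
    (X : Matrix ι (Fin m) R) (i : ι) (j : Fin n) :
    (X * (stdRank m n r : Matrix (Fin m) (Fin n) R)) i j =
      if h : (j : ℕ) < r then X i ⟨j, h.trans_le hr⟩ else 0 := by
  rw [← transpose_apply (X * _), transpose_mul, stdRank_transpose, stdRank_mul_apply hr]
  rfl

end StdRank

section SupportedOn

variable {R : Type*} [Semiring R] {m n : Type*}

def supportedOn (s : Finset (m × n)) : Submodule R (Matrix m n R) where
  carrier := {M | ∀ i j, (i, j) ∉ s → M i j = 0}
  add_mem' hM hN i j h := by rw [add_apply, hM i j h, hN i j h, add_zero]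
  zero_mem' _ _ _ := rfl
  smul_mem' c M hM i j h := by rw [smul_apply, hM i j h, smul_zero]

theorem mem_supportedOn {s : Finset (m × n)} {M : Matrix m n R} :
    M ∈ supportedOn s ↔ ∀ i j, (i, j) ∉ s → M i j = 0 := Iff.rfl

def supportedOnEquiv [DecidableEq m] [DecidableEq n] (s : Finset (m × n)) :
    supportedOn (R := R) s ≃ₗ[R] (s → R) where
  toFun M x := M.1 x.1.1 x.1.2
  map_add' _ _ := rfl
  map_smul' _ _ := rfl
  invFun g := ⟨fun i j => if h : (i, j) ∈ s then g ⟨(i, j), h⟩ else 0,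
    fun i j h => dif_neg h⟩
  left_inv M := by
    ext i j
    by_cases h : (i, j) ∈ s
    · simp [h]
    · simp [h, M.2 i j h]
  right_inv g := by
    ext ⟨⟨i, j⟩, h⟩
    simp [h]

theorem finrank_supportedOn [StrongRankCondition R] [DecidableEq m] [DecidableEq n]
    (s : Finset (m × n)) : finrank R (supportedOn (R := R) s) = #s := by
  rw [(supportedOnEquiv s).finrank_eq, finrank_fintype_fun_eq_card, Fintype.card_coe]

end SupportedOn

section UnitsMul

variable {R : Type*} [CommSemiring R] {m n : Type*} [Fintype m] [Fintype n]
  [DecidableEq m] [DecidableEq n]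

theorem mul_units_mul_inv {l : Type*} (X : Matrix l m R) (A : (Matrix m m R)ˣ) :
    X * (A : Matrix m m R) * (↑A⁻¹ : Matrix m m R) = X := by
  rw [Matrix.mul_assoc, Units.mul_inv, Matrix.mul_one]

theorem mul_units_inv_mul {l : Type*} (X : Matrix l m R) (A : (Matrix m m R)ˣ) :
    X * (↑A⁻¹ : Matrix m m R) * (A : Matrix m m R) = X := by
  rw [Matrix.mul_assoc, Units.inv_mul, Matrix.mul_one]

def mulLeftRightEquiv (A : (Matrix m m R)ˣ) (B : (Matrix n n R)ˣ) :
    Matrix m n R ≃ₗ[R] Matrix m n R where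
  toFun X := (A : Matrix m m R) * X * (B : Matrix n n R)
  invFun X := (↑A⁻¹ : Matrix m m R) * X * (↑B⁻¹ : Matrix n n R)
  map_add' X Y := by rw [Matrix.mul_add, Matrix.add_mul]
  map_smul' c X := by rw [Matrix.mul_smul, Matrix.smul_mul]; rfl
  left_inv X := by
    simp only [← Matrix.mul_assoc, Units.inv_mul, Matrix.one_mul, mul_units_mul_inv]
  right_inv X := by
    simp only [← Matrix.mul_assoc, Units.mul_inv, Matrix.one_mul, mul_units_inv_mul]

@[simp]
theorem mulLeftRightEquiv_apply (A : (Matrix m m R)ˣ) (B : (Matrix n n R)ˣ) (X : Matrix m n R) :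
    mulLeftRightEquiv A B X = (A : Matrix m m R) * X * (B : Matrix n n R) := rfl

end UnitsMul

end Matrix

theorem Fin.card_filter_le_val (n r : ℕ) : #{i : Fin n | r ≤ (i : ℕ)} = n - r := by
  have := Finset.card_filter_add_card_filter_not (s := Finset.univ) (fun i : Fin n => (i : ℕ) < r)
  simp only [not_lt, Fin.card_filter_val_lt, Finset.card_univ, Fintype.card_fin] at this
  omega

def corner (m n r₁ r₂ : ℕ) : Finset (Fin m × Fin n) := {x | r₁ ≤ (x.1 : ℕ) ∧ r₂ ≤ (x.2 : ℕ)}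

theorem card_corner (m n r₁ r₂ : ℕ) : #(corner m n r₁ r₂) = (m - r₁) * (n - r₂) := by
  rw [corner, ← univ_product_univ, filter_product (fun i : Fin m => r₁ ≤ (i : ℕ))
    (fun j : Fin n => r₂ ≤ (j : ℕ)), card_product, Fin.card_filter_le_val, Fin.card_filter_le_val]

theorem LinearMap.exists_basis_sum_apply {K V W : Type*} [DivisionRing K] [AddCommGroup V]
    [Module K V] [AddCommGroup W] [Module K W] [FiniteDimensional K V] [FiniteDimensional K W]
    (f : V →ₗ[K] W) :
    ∃ (bV : Basis (Fin (finrank K (range f)) ⊕ Fin (finrank K V - finrank K (range f))) K V)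
      (bW : Basis (Fin (finrank K (range f)) ⊕ Fin (finrank K W - finrank K (range f))) K W),
      (∀ i, f (bV (.inl i)) = bW (.inl i)) ∧ ∀ j, f (bV (.inr j)) = 0 := by
  obtain ⟨C, hC⟩ := (ker f).exists_isCompl
  obtain ⟨D, hD⟩ := (range f).exists_isCompl
  let g : C ≃ₗ[K] range f := (Submodule.quotientEquivOfIsCompl _ _ hC).symm ≪≫ₗ f.quotKerEquivRange
  have hg (c : C) : (g c : W) = f c := rfl
  have hCr : finrank K C = finrank K (range f) := g.finrank_eq
  have hKr : finrank K (ker f) = finrank K V - finrank K (range f) := by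
    have := f.finrank_range_add_finrank_ker; omega
  have hDr : finrank K D = finrank K W - finrank K (range f) := by
    have := Submodule.finrank_add_eq_of_isCompl hD; omega
  let bC := finBasisOfFinrankEq K C hCr
  refine ⟨(bC.prod (finBasisOfFinrankEq K _ hKr)).map (Submodule.prodEquivOfIsCompl _ _ hC.symm),
    ((bC.map g).prod (finBasisOfFinrankEq K D hDr)).map (Submodule.prodEquivOfIsCompl _ _ hD),
    fun i => ?_, fun j => ?_⟩
  · simp [hg]
  · simp

section NormalForm

variable {K V W : Type*} [Field K] [AddCommGroup V] [Module K V] [AddCommGroup W] [Module K W]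
  [FiniteDimensional K V] [FiniteDimensional K W]

theorem LinearMap.exists_basis_toMatrix_eq_stdRank (f : V →ₗ[K] W) {m n : ℕ}
    (hn : finrank K V = n) (hm : finrank K W = m) :
    ∃ (bV : Basis (Fin n) K V) (bW : Basis (Fin m) K W),
      toMatrix bV bW f = stdRank m n (finrank K (range f)) := by
  obtain ⟨bV, bW, hinl, hinr⟩ := f.exists_basis_sum_apply
  have hrn := f.finrank_range_le
  have hrm := Submodule.finrank_le (range f)
  let eV := finSumFinEquiv.trans
    (finCongr (by omega : finrank K (range f) + (finrank K V - finrank K (range f)) = n))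
  let eW := finSumFinEquiv.trans
    (finCongr (by omega : finrank K (range f) + (finrank K W - finrank K (range f)) = m))
  refine ⟨bV.reindex eV, bW.reindex eW, ?_⟩
  ext i j
  obtain ⟨s, rfl⟩ := eW.surjective i
  obtain ⟨t, rfl⟩ := eV.surjective j
  rcases s with s | s <;> rcases t with t | t <;>
    simp [eV, eW, toMatrix_apply, stdRank, hinl, hinr, Finsupp.single_apply, Fin.ext_iff, eq_comm]

theorem Matrix.exists_units_eq_mul_stdRank_mul {m n : ℕ} (H : Matrix (Fin m) (Fin n) K) :
    ∃ (P : (Matrix (Fin m) (Fin m) K)ˣ) (Q : (Matrix (Fin n) (Fin n) K)ˣ),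
      H = (P : Matrix (Fin m) (Fin m) K) * (stdRank m n H.rank : Matrix (Fin m) (Fin n) K) *
        (Q : Matrix (Fin n) (Fin n) K) := by
  obtain ⟨bV, bW, hf⟩ :=
    (toLin' H).exists_basis_toMatrix_eq_stdRank (finrank_fin_fun K) (finrank_fin_fun K)
  have := basis_toMatrix_mul_linearMap_toMatrix_mul_basis_toMatrix
    (Pi.basisFun K (Fin n)) bV (Pi.basisFun K (Fin m)) bW (toLin' H)
  rw [hf, ← Matrix.toLin_eq_toLin', LinearMap.toMatrix_toLin] at this
  exact ⟨⟨_, _, Basis.toMatrix_mul_toMatrix_flip _ bW, Basis.toMatrix_mul_toMatrix_flip bW _⟩,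
    ⟨_, _, Basis.toMatrix_mul_toMatrix_flip bV _, Basis.toMatrix_mul_toMatrix_flip _ bV⟩,
    this.symm⟩

end NormalForm

section HypergraphProduct

variable {m₁ n₁ m₂ n₂ : ℕ}

theorem D1_comp_D2 (H₁ : Matrix (Fin m₁) (Fin n₁) F2) (H₂ : Matrix (Fin m₂) (Fin n₂) F2) :
    (D1 H₁ H₂).comp (D2 H₁ H₂) = 0 := by
  refine LinearMap.ext fun X => ?_
  change H₁ * X * H₂ᵀ + H₁ * (X * H₂ᵀ) = 0
  rw [Matrix.mul_assoc]
  ext i j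
  exact CharTwo.add_self_eq_zero _

variable {H₁ E₁ : Matrix (Fin m₁) (Fin n₁) F2} {H₂ E₂ : Matrix (Fin m₂) (Fin n₂) F2}
  {P₁ : (Matrix (Fin m₁) (Fin m₁) F2)ˣ} {Q₁ : (Matrix (Fin n₁) (Fin n₁) F2)ˣ}
  {P₂ : (Matrix (Fin n₂) (Fin n₂) F2)ˣ} {Q₂ : (Matrix (Fin m₂) (Fin m₂) F2)ˣ}

theorem D2_conj (h₁ : H₁ = P₁.val * E₁ * Q₁.val) (h₂ : H₂ᵀ = P₂.val * E₂ᵀ * Q₂.val) :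
    ((mulLeftRightEquiv P₁⁻¹ P₂).prodCongr (mulLeftRightEquiv Q₁ Q₂⁻¹)).toLinearMap ∘ₗ D2 H₁ H₂
      = D2 E₁ E₂ ∘ₗ (mulLeftRightEquiv Q₁ P₂).toLinearMap := by
  refine LinearMap.ext fun X => Prod.ext ?_ ?_ <;>
    simp only [D2, h₁, h₂, LinearMap.coe_comp, LinearEquiv.coe_coe, Function.comp_apply,
      LinearMap.coe_mk, AddHom.coe_mk, LinearEquiv.prodCongr_apply, mulLeftRightEquiv_apply,
      ← Matrix.mul_assoc, Units.inv_mul, Matrix.one_mul, mul_units_mul_inv]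

theorem D1_conj (h₁ : H₁ = P₁.val * E₁ * Q₁.val) (h₂ : H₂ᵀ = P₂.val * E₂ᵀ * Q₂.val) :
    (mulLeftRightEquiv P₁⁻¹ Q₂⁻¹).toLinearMap ∘ₗ D1 H₁ H₂
      = D1 E₁ E₂ ∘ₗ
          ((mulLeftRightEquiv P₁⁻¹ P₂).prodCongr (mulLeftRightEquiv Q₁ Q₂⁻¹)).toLinearMap := by
  refine LinearMap.ext fun ⟨U, W⟩ => ?_
  simp only [D1, h₁, h₂, LinearMap.coe_comp, LinearEquiv.coe_coe, Function.comp_apply,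
    LinearMap.coe_mk, AddHom.coe_mk, LinearEquiv.prodCongr_apply, mulLeftRightEquiv_apply,
    Matrix.mul_add, Matrix.add_mul, ← Matrix.mul_assoc, Units.inv_mul, Matrix.one_mul,
    mul_units_mul_inv]

variable {r₁ r₂ : ℕ}

theorem ker_D2_stdRank (h₁m : r₁ ≤ m₁) (h₁n : r₁ ≤ n₁) (h₂m : r₂ ≤ m₂) (h₂n : r₂ ≤ n₂) :
    ker (D2 (stdRank m₁ n₁ r₁) (stdRank m₂ n₂ r₂)) = supportedOn (corner n₁ n₂ r₁ r₂) := by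
  ext X
  simp only [mem_ker, mem_supportedOn, D2, LinearMap.coe_mk, AddHom.coe_mk, Prod.mk_eq_zero,
    stdRank_transpose, ← Matrix.ext_iff, stdRank_mul_apply h₁n, mul_stdRank_apply h₂n,
    Matrix.zero_apply, corner, mem_filter, mem_univ, true_and, not_and_or, not_le]
  constructor
  · rintro ⟨hrow, hcol⟩ i j (hi | hj)
    · simpa [hi] using hrow ⟨i, hi.trans_le h₁m⟩ j
    · simpa [hj] using hcol i ⟨j, hj.trans_le h₂m⟩
  · intro hX
    exact ⟨fun i j => by split_ifs with hi; exacts [hX _ _ (.inl hi), rfl],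
      fun i j => by split_ifs with hj; exacts [hX _ _ (.inr hj), rfl]⟩

theorem range_D1_stdRank (h₁m : r₁ ≤ m₁) (h₁n : r₁ ≤ n₁) (h₂m : r₂ ≤ m₂) (h₂n : r₂ ≤ n₂) :
    range (D1 (stdRank m₁ n₁ r₁) (stdRank m₂ n₂ r₂)) = supportedOn (corner m₁ m₂ r₁ r₂)ᶜ := by
  ext M
  simp only [LinearMap.mem_range, mem_supportedOn, D1, LinearMap.coe_mk, AddHom.coe_mk,
    stdRank_transpose, corner, mem_compl, mem_filter, mem_univ, true_and, not_not, Prod.exists]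
  constructor
  · rintro ⟨U, W, rfl⟩ i j ⟨hi, hj⟩
    rw [Matrix.add_apply, mul_stdRank_apply h₂n, stdRank_mul_apply h₁n, dif_neg (by omega),
      dif_neg (by omega), add_zero]
  · intro hM
    refine ⟨of fun i j => if h : (j : ℕ) < r₂ then M i ⟨j, h.trans_le h₂m⟩ else 0,
      of fun i j => if h : (i : ℕ) < r₁ ∧ r₂ ≤ (j : ℕ) then M ⟨i, h.1.trans_le h₁m⟩ j else 0, ?_⟩
    ext i j
    rw [Matrix.add_apply, mul_stdRank_apply h₂n, stdRank_mul_apply h₁n]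
    by_cases hj : (j : ℕ) < r₂ <;> by_cases hi : (i : ℕ) < r₁ <;> simp [hi, hj]
    exact (hM i j ⟨not_lt.mp hi, not_lt.mp hj⟩).symm

theorem exists_D2_D1_conj_stdRank (H₁ : Matrix (Fin m₁) (Fin n₁) F2)
    (H₂ : Matrix (Fin m₂) (Fin n₂) F2) :
    ∃ (Φ : Matrix (Fin n₁) (Fin n₂) F2 ≃ₗ[F2] Matrix (Fin n₁) (Fin n₂) F2)
      (Ψ : (Matrix (Fin m₁) (Fin n₂) F2 × Matrix (Fin n₁) (Fin m₂) F2) ≃ₗ[F2]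
        Matrix (Fin m₁) (Fin n₂) F2 × Matrix (Fin n₁) (Fin m₂) F2)
      (Θ : Matrix (Fin m₁) (Fin m₂) F2 ≃ₗ[F2] Matrix (Fin m₁) (Fin m₂) F2),
      Ψ.toLinearMap ∘ₗ D2 H₁ H₂
          = D2 (stdRank m₁ n₁ H₁.rank) (stdRank m₂ n₂ H₂.rank) ∘ₗ Φ.toLinearMap ∧
        Θ.toLinearMap ∘ₗ D1 H₁ H₂
          = D1 (stdRank m₁ n₁ H₁.rank) (stdRank m₂ n₂ H₂.rank) ∘ₗ Ψ.toLinearMap := by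
  obtain ⟨P₁, Q₁, h₁⟩ := H₁.exists_units_eq_mul_stdRank_mul
  -- The complex only involves `H₂ᵀ`, so it is `H₂ᵀ` that is put in normal form.
  obtain ⟨P₂, Q₂, h₂⟩ := H₂ᵀ.exists_units_eq_mul_stdRank_mul
  rw [rank_transpose, ← stdRank_transpose] at h₂
  exact ⟨_, _, _, D2_conj h₁ h₂, D1_conj h₁ h₂⟩

theorem finrank_ker_D2 (H₁ : Matrix (Fin m₁) (Fin n₁) F2) (H₂ : Matrix (Fin m₂) (Fin n₂) F2) :
    finrank F2 (ker (D2 H₁ H₂)) = (n₁ - H₁.rank) * (n₂ - H₂.rank) := by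
  obtain ⟨Φ, Ψ, -, h, -⟩ := exists_D2_D1_conj_stdRank H₁ H₂
  rw [finrank_ker_eq_of_comp_eq Φ Ψ h, ker_D2_stdRank H₁.rank_le_height H₁.rank_le_width
    H₂.rank_le_height H₂.rank_le_width, finrank_supportedOn, card_corner]

theorem finrank_range_D1_add (H₁ : Matrix (Fin m₁) (Fin n₁) F2)
    (H₂ : Matrix (Fin m₂) (Fin n₂) F2) :
    finrank F2 (range (D1 H₁ H₂)) + (m₁ - H₁.rank) * (m₂ - H₂.rank) = m₁ * m₂ := by
  obtain ⟨-, Ψ, Θ, -, h⟩ := exists_D2_D1_conj_stdRank H₁ H₂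
  rw [finrank_range_eq_of_comp_eq Ψ Θ h, range_D1_stdRank H₁.rank_le_height H₁.rank_le_width
    H₂.rank_le_height H₂.rank_le_width, finrank_supportedOn, ← card_corner, card_compl_add_card,
    Fintype.card_prod, Fintype.card_fin, Fintype.card_fin]

end HypergraphProduct

/-- **Künneth dimension count for the 2D hypergraph-product code (Lemmas 5, 6, 12).**
`D₁ ∘ D₂ = 0`, and the homology dimensions of the product complex are
`dim ker D₂ = (n₁−r₁)(n₂−r₂)`,
`dim (ker D₁ / range D₂) = (n₁−r₁)(m₂−r₂) + (m₁−r₁)(n₂−r₂)`  (the number of logical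
qubits of the 2D hypergraph-product code), and
`dim (coker D₁) = (m₁−r₁)(m₂−r₂)`, where `rᵢ = rank Hᵢ`. -/
theorem hypergraph_product_kunneth_dimensions
    {m₁ n₁ m₂ n₂ : ℕ} (H₁ : Matrix (Fin m₁) (Fin n₁) F2)
    (H₂ : Matrix (Fin m₂) (Fin n₂) F2) :
    (D1 H₁ H₂).comp (D2 H₁ H₂) = 0 ∧
    Module.finrank F2 (LinearMap.ker (D2 H₁ H₂))
      = (n₁ - H₁.rank) * (n₂ - H₂.rank) ∧
    Module.finrank F2
      (↥(LinearMap.ker (D1 H₁ H₂)) ⧸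
        Submodule.comap (LinearMap.ker (D1 H₁ H₂)).subtype
          (LinearMap.range (D2 H₁ H₂)))
      = (n₁ - H₁.rank) * (m₂ - H₂.rank) + (m₁ - H₁.rank) * (n₂ - H₂.rank) ∧
    Module.finrank F2
      ((Matrix (Fin m₁) (Fin m₂) F2) ⧸ LinearMap.range (D1 H₁ H₂))
      = (m₁ - H₁.rank) * (m₂ - H₂.rank) := by
  have hcomp := D1_comp_D2 H₁ H₂
  have hker₂ := finrank_ker_D2 H₁ H₂
  have hrange₁ := finrank_range_D1_add H₁ H₂
  have hD₂ := (D2 H₁ H₂).finrank_range_add_finrank_ker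
  have hhom := finrank_homology_add_finrank_range_add_finrank_range hcomp
  have hcoker := (range (D1 H₁ H₂)).finrank_quotient_add_finrank
  simp only [finrank_prod, finrank_matrix, Fintype.card_fin, finrank_self, mul_one]
    at hD₂ hhom hcoker
  refine ⟨hcomp, hker₂, ?_, by omega⟩
  zify [H₁.rank_le_height, H₁.rank_le_width, H₂.rank_le_height, H₂.rank_le_width]
    at hD₂ hhom hker₂ hrange₁ ⊢
  linear_combination hhom - hD₂ + hker₂ - hrange₁
end
end

section
/- Let A : Matrix (Fin a₁) (Fin a₀) 𝔽₂ and B : Matrix (Fin b₁) (Fin b₀) 𝔽₂, and let α : Fin a₁ → 𝔽₂ with α not in the range of A and β : Fin b₁ → 𝔽₂ with β not in the range of B. Then for every U : Matrix (Fin a₁) (Fin b₀) 𝔽₂ and every W : Matrix (Fin a₀) (Fin b₁) 𝔽₂, the Hamming weight of the a₁ × b₁ matrix α ⬝ βᵀ + U * Bᵀ + A * W is at least max(w_A(α), w_B(β)). Equivalently, every cochain representative of the Künneth class [α ⊗ β] in the middle cohomology of the tensor-product complex has Hamming weight at least the larger of the minimal coset weights of [α] and [β]. (The tensor-product weight bound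 used to prove the Ω(√n) distance estimates of Lemmas 8, 9, 10, 11 and 12.) -/
noncomputable section

open Matrix

/-- Hamming weight of a vector over `𝔽₂`. -/
def vWeight {m : ℕ} (v : Fin m → F2) : ℕ :=
  (Finset.univ.filter fun i => v i ≠ 0).card

/-- Hamming weight (number of nonzero entries) of a matrix over `𝔽₂`. -/
def mWeight {m n : ℕ} (M : Matrix (Fin m) (Fin n) F2) : ℕ :=
  (Finset.univ.filter fun p : Fin m × Fin n => M p.1 p.2 ≠ 0).card

/-- The coset weight `w_A(α)`: the minimal Hamming weight of a representative of the
cohomology class of `α` modulo the range of `A`. -/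
def cosetWeight {m n : ℕ} (A : Matrix (Fin m) (Fin n) F2) (α : Fin m → F2) : ℕ :=
  sInf {w | ∃ x : Fin n → F2, w = vWeight (α + A.mulVec x)}

/-! Since `β` is not in the range of `B`, some `y` annihilates the columns of `B` and has
`y ⬝ᵥ β = 1`. Multiplying a representative `M` of `[α ⊗ β]` by `y` gives `α + A (W y)`, a
representative of `[α]`, and every nonzero entry of `M y` is witnessed by a nonzero entry in the
same row of `M`; hence `w_A(α) ≤ |M y| ≤ |M|`. Transposing `M` exchanges the two factors. -/

theorem Matrix.exists_vecMul_eq_zero_dotProduct_eq_one {K m n : Type*} [Field K] [Fintype m]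
    [Fintype n] (A : Matrix m n K) (α : m → K) (hα : ¬ ∃ x, α = A *ᵥ x) :
    ∃ y : m → K, y ᵥ* A = 0 ∧ y ⬝ᵥ α = 1 := by
  classical
  obtain ⟨f, hfα, hf⟩ := (LinearMap.range A.mulVecLin).exists_dual_map_eq_bot_of_notMem
    (x := α) (by rintro ⟨x, rfl⟩; exact hα ⟨x, rfl⟩) inferInstance
  set y := (dotProductEquiv K m).symm f
  have hy (v : m → K) : y ⬝ᵥ v = f v :=
    LinearMap.congr_fun ((dotProductEquiv K m).apply_symm_apply f) v
  have hyA : y ᵥ* A = 0 := by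
    ext j
    rw [← dotProduct_single_one (y ᵥ* A), ← dotProduct_mulVec, hy, Pi.zero_apply]
    exact LinearMap.le_ker_iff_map.2 hf ⟨Pi.single j 1, rfl⟩
  refine ⟨(f α)⁻¹ • y, by rw [smul_vecMul, hyA, smul_zero], ?_⟩
  rw [smul_dotProduct, hy, smul_eq_mul, inv_mul_cancel₀ hfα]

theorem vWeight_mulVec_le_mWeight {m n : ℕ} (M : Matrix (Fin m) (Fin n) F2) (y : Fin n → F2) :
    vWeight (M *ᵥ y) ≤ mWeight M := by
  unfold vWeight mWeight
  calc _ ≤ ((Finset.univ.filter fun p : Fin m × Fin n => M p.1 p.2 ≠ 0).image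
          Prod.fst).card := by
        refine Finset.card_le_card fun i hi => ?_
        have hi : ∑ j, M i j * y j ≠ 0 := (Finset.mem_filter.1 hi).2
        obtain ⟨j, -, hj⟩ := Finset.exists_ne_zero_of_sum_ne_zero hi
        exact Finset.mem_image.2 ⟨(i, j), by simpa using left_ne_zero_of_mul hj, rfl⟩
    _ ≤ _ := Finset.card_image_le

theorem mWeight_transpose {m n : ℕ} (M : Matrix (Fin m) (Fin n) F2) :
    mWeight Mᵀ = mWeight M :=
  Finset.card_equiv (Equiv.prodComm _ _) fun _ => by
    simp only [Finset.mem_filter, Finset.mem_univ, true_and]; rfl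

theorem cosetWeight_le_vWeight {m n : ℕ} (A : Matrix (Fin m) (Fin n) F2) (α : Fin m → F2)
    (x : Fin n → F2) : cosetWeight A α ≤ vWeight (α + A *ᵥ x) :=
  Nat.sInf_le ⟨x, rfl⟩

namespace Matrix

variable {R l m n k : Type*} [CommRing R] [Fintype m] [Fintype k]

/-- A cochain representative of the Künneth class `[α ⊗ β]`. -/
def kunnethRep (A : Matrix l m R) (B : Matrix n k R) (α : l → R) (β : n → R)
    (U : Matrix l k R) (W : Matrix m n R) : Matrix l n R :=
  vecMulVec α β + U * Bᵀ + A * W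

theorem kunnethRep_transpose (A : Matrix l m R) (B : Matrix n k R)
    (α : l → R) (β : n → R) (U : Matrix l k R) (W : Matrix m n R) :
    (kunnethRep A B α β U W)ᵀ = kunnethRep B A β α Wᵀ Uᵀ := by
  simp only [kunnethRep, transpose_add, transpose_vecMulVec, transpose_mul, transpose_transpose]
  abel

theorem kunnethRep_mulVec [Fintype n] (A : Matrix l m R)
    (B : Matrix n k R) (α : l → R) (β y : n → R) (U : Matrix l k R) (W : Matrix m n R)
    (hyB : y ᵥ* B = 0) (hyβ : y ⬝ᵥ β = 1) :
    kunnethRep A B α β U W *ᵥ y = α + A *ᵥ (W *ᵥ y) := by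
  have hBy : Bᵀ *ᵥ y = 0 := by rw [mulVec_transpose, hyB]
  rw [kunnethRep, add_mulVec, add_mulVec, vecMulVec_mulVec, dotProduct_comm, hyβ,
    ← mulVec_mulVec, hBy, ← mulVec_mulVec, MulOpposite.op_one, one_smul, mulVec_zero, add_zero]

end Matrix

theorem cosetWeight_le_mWeight_kunnethRep {a₁ a₀ b₁ b₀ : ℕ}
    (A : Matrix (Fin a₁) (Fin a₀) F2) (B : Matrix (Fin b₁) (Fin b₀) F2)
    (α : Fin a₁ → F2) (β : Fin b₁ → F2) (hβ : ¬ ∃ x : Fin b₀ → F2, β = B *ᵥ x)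
    (U : Matrix (Fin a₁) (Fin b₀) F2) (W : Matrix (Fin a₀) (Fin b₁) F2) :
    cosetWeight A α ≤ mWeight (kunnethRep A B α β U W) := by
  obtain ⟨y, hyB, hyβ⟩ := B.exists_vecMul_eq_zero_dotProduct_eq_one β hβ
  calc cosetWeight A α ≤ vWeight (α + A *ᵥ (W *ᵥ y)) := cosetWeight_le_vWeight A α _
    _ = vWeight (kunnethRep A B α β U W *ᵥ y) := by
        rw [kunnethRep_mulVec A B α β y U W hyB hyβ]
    _ ≤ _ := vWeight_mulVec_le_mWeight _ y

/-- **Tensor-product weight bound (used for the `Ω(√n)` distance estimates of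
Lemmas 8–12).**  If `α` is not in the range of `A` and `β` is not in the range of `B`,
then every cochain representative `α ⬝ βᵀ + U * Bᵀ + A * W` of the Künneth class
`[α ⊗ β]` in the middle cohomology of the tensor-product complex has Hamming weight at
least `max(w_A(α), w_B(β))`. -/
theorem tensor_product_weight_bound
    {a₁ a₀ b₁ b₀ : ℕ}
    (A : Matrix (Fin a₁) (Fin a₀) F2) (B : Matrix (Fin b₁) (Fin b₀) F2)
    (α : Fin a₁ → F2) (hα : ¬ ∃ x : Fin a₀ → F2, α = A.mulVec x)
    (β : Fin b₁ → F2) (hβ : ¬ ∃ x : Fin b₀ → F2, β = B.mulVec x)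
    (U : Matrix (Fin a₁) (Fin b₀) F2) (W : Matrix (Fin a₀) (Fin b₁) F2) :
    max (cosetWeight A α) (cosetWeight B β)
      ≤ mWeight (Matrix.vecMulVec α β + U * Bᵀ + A * W) := by
  change _ ≤ mWeight (kunnethRep A B α β U W)
  refine max_le (cosetWeight_le_mWeight_kunnethRep A B α β hβ U W) ?_
  rw [← mWeight_transpose, kunnethRep_transpose]
  exact cosetWeight_le_mWeight_kunnethRep B A β α hα Wᵀ Uᵀ
end
end
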